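/- arXiv:2208.03941 — 2 statements merged into one kernel-verified Lean document; each statement's English description precedes it below -/
import Mathlib

section
/- Let n be a positive integer, H a symmetric n×n real matrix, and λ0, λm, s positive reals with 0 < s ≤ 2/λm, such that (3λ0/4)‖v‖² ≤ vᵀHv ≤ λm‖v‖² for all v ∈ ℝⁿ. Let Δ : ℝ → ℝⁿ be twice continuously differentiable and satisfy the Nesterov residual dynamics Δ''(t) + √(2λ0) Δ'(t) + √s H Δ'(t) + (1 + √(λ0 s/2)) H Δ(t) = 0 for all t ≥ 0, with Δ'(0) = 0. Set α := √(2 λ0 s)/4 and ρ*_NAG(α) := (1/2)(4 + 3α − √(8 + 16α + 9α²)). Then for all t ≥ 0, the loss L(t) := (1/2)‖Δ(t)‖² satisfies L(t) ≤ (26 L̂(0)/(3 λ0)) · exp(−ρ*_NAG(α) √(λ0/2) t), where L̂(0) := (1/2) Δ(0)ᵀ H Δ(0). -/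
/-!
Write μ = √(λ₀/2), σ = √s and T = H, so that the dynamics read
x'' + 2μ x' + σ T x' + (1 + μσ) T x = 0 with ⟪v, T v⟫ ≥ μ²‖v‖².
For every ρ ∈ [0, 1] the energy
V = ½‖x'‖² + ρμ⟪x, x'⟫ + q/2 ⟪x, T x⟫ + (2ρ - ρ²)μ²/2 ‖x‖²,  q = 1 + μσ + μσρ,
satisfies V' ≤ -ρμ V along solutions: q is chosen so that the cross terms ⟪x', T x⟫ cancel, and
what remains is a sum of nonpositive terms. Grönwall gives V(t) ≤ V(0) e^{-ρμt}. Completing the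
square shows q/2 ⟪x, T x⟫ ≤ V, while V(0) ≤ (q + 1)/2 ⟪x₀, T x₀⟫ when x'(0) = 0, so the pseudo-loss
decays at rate ρμ up to a factor 2, and the lower bound on H turns this into the bound on the loss.
The rate ρ*_NAG(α) lies in [0, 1].
-/

open scoped RealInnerProductSpace

open Real

lemma le_mul_exp_of_hasDerivAt_le {f f' : ℝ → ℝ} {c : ℝ} (hf : ∀ t, HasDerivAt f (f' t) t)
    (hdecay : ∀ t, 0 ≤ t → f' t ≤ -c * f t) {t : ℝ} (ht : 0 ≤ t) :
    f t ≤ f 0 * exp (-c * t) := by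
  have h := le_gronwallBound_of_liminf_deriv_right_le (K := -c) (ε := 0)
    (fun s _ => (hf s).continuousAt.continuousWithinAt)
    (fun s _ _ hr => (hf s).hasDerivWithinAt.liminf_right_slope_le hr) le_rfl
    (fun s hs => by simpa using hdecay s hs.1) t ⟨ht, le_rfl⟩
  simpa [gronwallBound_ε0] using h

noncomputable def nagRate (α : ℝ) : ℝ := (1 / 2) * (4 + 3 * α - √(8 + 16 * α + 9 * α ^ 2))

lemma nagRate_nonneg {α : ℝ} (hα : 0 ≤ α) : 0 ≤ nagRate α := by
  have : √(8 + 16 * α + 9 * α ^ 2) ≤ 4 + 3 * α :=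
    (sqrt_le_left (by positivity)).2 (by nlinarith)
  unfold nagRate; linarith

lemma nagRate_le_one {α : ℝ} (hα : 0 ≤ α) : nagRate α ≤ 1 := by
  have : 2 + 3 * α ≤ √(8 + 16 * α + 9 * α ^ 2) :=
    (le_sqrt (by positivity) (by positivity)).2 (by nlinarith)
  unfold nagRate; linarith

lemma sqrt_two_mul_eq (a : ℝ) : √(2 * a) = 2 * √(a / 2) := by
  rw [show 2 * a = 2 ^ 2 * (a / 2) by ring, sqrt_mul (by positivity), sqrt_sq two_pos.le]

lemma sqrt_mul_div_two_eq {a : ℝ} (ha : 0 ≤ a) (s : ℝ) : √(a * s / 2) = √(a / 2) * √s := by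
  rw [← sqrt_mul (by positivity)]; ring_nf

lemma sqrt_two_mul_mul_div_four {a : ℝ} (ha : 0 ≤ a) (s : ℝ) :
    √(2 * a * s) / 4 = √(a / 2) * √s / 2 := by
  rw [show 2 * a * s = a * s / 2 * 2 ^ 2 by ring, sqrt_mul' _ (by positivity), sqrt_sq two_pos.le,
    sqrt_mul_div_two_eq ha]
  ring

section NagLyapunov

variable {E : Type*} [NormedAddCommGroup E] [InnerProductSpace ℝ E]
  (T : E →L[ℝ] E) (μ σ ρ : ℝ)

noncomputable def nagLyapunov (x v : E) : ℝ :=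
  1 / 2 * ‖v‖ ^ 2 + ρ * μ * ⟪x, v⟫ + (1 + μ * σ + μ * σ * ρ) / 2 * ⟪x, T x⟫
    + (2 * ρ - ρ ^ 2) * μ ^ 2 / 2 * ‖x‖ ^ 2

noncomputable def nagLyapunovDeriv (x v a : E) : ℝ :=
  ⟪v, a⟫ + ρ * μ * (‖v‖ ^ 2 + ⟪x, a⟫) + (1 + μ * σ + μ * σ * ρ) * ⟪v, T x⟫
    + (2 * ρ - ρ ^ 2) * μ ^ 2 * ⟪x, v⟫

variable {T μ σ ρ}

lemma hasDerivAt_nagLyapunov (hT : (T : E →ₗ[ℝ] E).IsSymmetric) {x v : ℝ → E} {a : E} {t : ℝ}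
    (hx : HasDerivAt x (v t) t) (hv : HasDerivAt v a t) :
    HasDerivAt (fun t ↦ nagLyapunov T μ σ ρ (x t) (v t))
      (nagLyapunovDeriv T μ σ ρ (x t) (v t) a) t := by
  have hTx : HasDerivAt (fun t ↦ T (x t)) (T (v t)) t := T.hasFDerivAt.comp_hasDerivAt t hx
  have hsymm : ⟪x t, T (v t)⟫ = ⟪v t, T (x t)⟫ := by
    rw [real_inner_comm]; exact hT (v t) (x t)
  refine ((((hv.norm_sq.const_mul (1 / 2)).add ((hx.inner ℝ hv).const_mul (ρ * μ))).add
    ((hx.inner ℝ hTx).const_mul ((1 + μ * σ + μ * σ * ρ) / 2))).add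
    (hx.norm_sq.const_mul ((2 * ρ - ρ ^ 2) * μ ^ 2 / 2))).congr_deriv ?_
  simp only [nagLyapunovDeriv, hsymm, real_inner_self_eq_norm_sq]
  ring

lemma nagLyapunovDeriv_le (hT : (T : E →ₗ[ℝ] E).IsSymmetric)
    (hcoer : ∀ v, μ ^ 2 * ‖v‖ ^ 2 ≤ ⟪v, T v⟫) (hμ : 0 ≤ μ) (hσ : 0 ≤ σ)
    (hρ₀ : 0 ≤ ρ) (hρ₁ : ρ ≤ 1) {x v a : E}
    (hode : a + (2 * μ) • v + σ • T v + (1 + μ * σ) • T x = 0) :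
    nagLyapunovDeriv T μ σ ρ x v a ≤ -(ρ * μ) * nagLyapunov T μ σ ρ x v := by
  obtain rfl : a = -((2 * μ) • v + σ • T v + (1 + μ * σ) • T x) := by
    rw [eq_neg_iff_add_eq_zero, ← hode]; abel
  have hsymm : ⟪x, T v⟫ = ⟪v, T x⟫ := by rw [real_inner_comm]; exact hT v x
  have hdiss : nagLyapunovDeriv T μ σ ρ x v (-((2 * μ) • v + σ • T v + (1 + μ * σ) • T x))
        + ρ * μ * nagLyapunov T μ σ ρ x v = -((2 - 3 / 2 * ρ) * μ * ‖v‖ ^ 2) - σ * ⟪v, T v⟫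
        - ρ * μ / 2 * ((1 + μ * σ * (1 - ρ)) * ⟪x, T x⟫ - (2 * ρ - ρ ^ 2) * μ ^ 2 * ‖x‖ ^ 2) := by
    simp only [nagLyapunovDeriv, nagLyapunov, inner_neg_right, inner_add_right,
      real_inner_smul_right, real_inner_self_eq_norm_sq, hsymm]
    ring
  have hv : 0 ≤ (2 - 3 / 2 * ρ) * μ * ‖v‖ ^ 2 := by
    have : 0 ≤ 2 - 3 / 2 * ρ := by linarith
    positivity
  have hTv : 0 ≤ σ * ⟪v, T v⟫ := mul_nonneg hσ ((hcoer v).trans' (by positivity))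
  have hx : (2 * ρ - ρ ^ 2) * μ ^ 2 * ‖x‖ ^ 2 ≤ (1 + μ * σ * (1 - ρ)) * ⟪x, T x⟫ := by
    have hμσρ : 0 ≤ μ * σ * (1 - ρ) := mul_nonneg (mul_nonneg hμ hσ) (sub_nonneg.2 hρ₁)
    rw [mul_assoc]
    exact mul_le_mul (by nlinarith) (hcoer x) (by positivity) (by positivity)
  have hρμ : 0 ≤ ρ * μ / 2 := by positivity
  nlinarith [mul_nonneg hρμ (sub_nonneg.2 hx)]

lemma inner_map_self_le_nagLyapunov (hρ₀ : 0 ≤ ρ) (hρ₁ : ρ ≤ 1) (x v : E) :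
    (1 + μ * σ + μ * σ * ρ) / 2 * ⟪x, T x⟫ ≤ nagLyapunov T μ σ ρ x v := by
  have hsq : nagLyapunov T μ σ ρ x v = 1 / 2 * ‖v + (ρ * μ) • x‖ ^ 2
      + (1 + μ * σ + μ * σ * ρ) / 2 * ⟪x, T x⟫ + ρ * (1 - ρ) * μ ^ 2 * ‖x‖ ^ 2 := by
    simp only [nagLyapunov, norm_add_sq_real, norm_smul, real_inner_smul_right, mul_pow,
      Real.norm_eq_abs, sq_abs, real_inner_comm x v]
    ring
  have : 0 ≤ ρ * (1 - ρ) * μ ^ 2 * ‖x‖ ^ 2 := by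
    have := sub_nonneg.2 hρ₁
    positivity
  rw [hsq]
  nlinarith [sq_nonneg ‖v + (ρ * μ) • x‖]

lemma nagLyapunov_zero_right_le (hcoer : ∀ v, μ ^ 2 * ‖v‖ ^ 2 ≤ ⟪v, T v⟫) (x : E) :
    nagLyapunov T μ σ ρ x 0 ≤ (1 + μ * σ + μ * σ * ρ + 1) / 2 * ⟪x, T x⟫ := by
  simp only [nagLyapunov, norm_zero, inner_zero_right]
  nlinarith [mul_nonneg (sq_nonneg (1 - ρ)) (mul_nonneg (sq_nonneg μ) (sq_nonneg ‖x‖)), hcoer x]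

variable (hT : (T : E →ₗ[ℝ] E).IsSymmetric) (hcoer : ∀ v, μ ^ 2 * ‖v‖ ^ 2 ≤ ⟪v, T v⟫)
  (hμ : 0 ≤ μ) (hσ : 0 ≤ σ) (hρ₀ : 0 ≤ ρ) (hρ₁ : ρ ≤ 1) {x : ℝ → E}
  (hx : Differentiable ℝ x) (hx' : Differentiable ℝ (deriv x))
  (hode : ∀ t, 0 ≤ t → deriv (deriv x) t + (2 * μ) • deriv x t + σ • T (deriv x t)
    + (1 + μ * σ) • T (x t) = 0)
include hT hcoer hμ hσ hρ₀ hρ₁ hx hx' hode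

theorem nagLyapunov_le_mul_exp {t : ℝ} (ht : 0 ≤ t) :
    nagLyapunov T μ σ ρ (x t) (deriv x t)
      ≤ nagLyapunov T μ σ ρ (x 0) (deriv x 0) * exp (-(ρ * μ) * t) :=
  le_mul_exp_of_hasDerivAt_le
    (fun s ↦ hasDerivAt_nagLyapunov hT (hx s).hasDerivAt (hx' s).hasDerivAt)
    (fun s hs ↦ nagLyapunovDeriv_le hT hcoer hμ hσ hρ₀ hρ₁ (hode s hs)) ht

theorem nag_inner_map_self_le_two_mul_exp (hx₀ : deriv x 0 = 0) {t : ℝ} (ht : 0 ≤ t) :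
    ⟪x t, T (x t)⟫ ≤ 2 * ⟪x 0, T (x 0)⟫ * exp (-ρ * μ * t) := by
  set q := 1 + μ * σ + μ * σ * ρ
  have hq : 1 ≤ q := by linarith [mul_nonneg hμ hσ, mul_nonneg (mul_nonneg hμ hσ) hρ₀]
  have hW₀ : 0 ≤ ⟪x 0, T (x 0)⟫ := (hcoer _).trans' (by positivity)
  have he := exp_pos (-ρ * μ * t)
  have hV : q / 2 * ⟪x t, T (x t)⟫ ≤ (q + 1) / 2 * ⟪x 0, T (x 0)⟫ * exp (-ρ * μ * t) :=
    calc q / 2 * ⟪x t, T (x t)⟫ ≤ nagLyapunov T μ σ ρ (x t) (deriv x t) :=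
          inner_map_self_le_nagLyapunov hρ₀ hρ₁ _ _
      _ ≤ nagLyapunov T μ σ ρ (x 0) 0 * exp (-ρ * μ * t) := by
          rw [← hx₀, neg_mul ρ]
          exact nagLyapunov_le_mul_exp hT hcoer hμ hσ hρ₀ hρ₁ hx hx' hode ht
      _ ≤ (q + 1) / 2 * ⟪x 0, T (x 0)⟫ * exp (-ρ * μ * t) := by
          gcongr
          exact nagLyapunov_zero_right_le hcoer _
  have : q * ⟪x t, T (x t)⟫ ≤ q * (2 * ⟪x 0, T (x 0)⟫ * exp (-ρ * μ * t)) := by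
    nlinarith [mul_nonneg (sub_nonneg.2 hq) (mul_nonneg hW₀ he.le)]
  exact le_of_mul_le_mul_left this (by linarith)

end NagLyapunov

theorem nag_loss_convergence_general
    (n : ℕ) (H : Matrix (Fin n) (Fin n) ℝ) (hHsymm : H.IsSymm)
    (lam0 s : ℝ) (hlam0 : 0 < lam0)
    (hlow : ∀ v : EuclideanSpace ℝ (Fin n),
      3 * lam0 / 4 * ‖v‖ ^ 2 ≤ ⟪v, Matrix.toEuclideanLin H v⟫)
    (Δ : ℝ → EuclideanSpace ℝ (Fin n)) (hΔ : ContDiff ℝ 2 Δ)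
    (hode : ∀ t : ℝ, 0 ≤ t →
      deriv (deriv Δ) t + Real.sqrt (2 * lam0) • deriv Δ t
        + Real.sqrt s • Matrix.toEuclideanLin H (deriv Δ t)
        + (1 + Real.sqrt (lam0 * s / 2)) • Matrix.toEuclideanLin H (Δ t) = 0)
    (hinit : deriv Δ 0 = 0) :
    ∀ t : ℝ, 0 ≤ t →
      (1 / 2) * ‖Δ t‖ ^ 2 ≤
        26 * ((1 / 2) * ⟪Δ 0, Matrix.toEuclideanLin H (Δ 0)⟫) / (3 * lam0) *
          Real.exp (-((1 / 2) * (4 + 3 * (Real.sqrt (2 * lam0 * s) / 4)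
              - Real.sqrt (8 + 16 * (Real.sqrt (2 * lam0 * s) / 4)
                  + 9 * (Real.sqrt (2 * lam0 * s) / 4) ^ 2)))
            * Real.sqrt (lam0 / 2) * t) := by
  intro t ht
  set μ := √(lam0 / 2)
  have hμ : μ ^ 2 = lam0 / 2 := sq_sqrt (by positivity)
  have hα : 0 ≤ μ * √s / 2 := by positivity
  have hT : (Matrix.toEuclideanLin H).IsSymmetric :=
    Matrix.isSymmetric_toEuclideanLin_iff.2 (Matrix.isHermitian_iff_isSymm.2 hHsymm)
  set T := (Matrix.toEuclideanLin H).toContinuousLinearMap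
  have hlowT : ∀ v, 3 * lam0 / 4 * ‖v‖ ^ 2 ≤ ⟪v, T v⟫ := hlow
  have hcoer (v : EuclideanSpace ℝ (Fin n)) : μ ^ 2 * ‖v‖ ^ 2 ≤ ⟪v, T v⟫ := by
    rw [hμ]; nlinarith [hlowT v, sq_nonneg ‖v‖]
  have hodeT (t : ℝ) (ht : 0 ≤ t) : deriv (deriv Δ) t + (2 * μ) • deriv Δ t
      + √s • T (deriv Δ t) + (1 + μ * √s) • T (Δ t) = 0 := by
    rw [← sqrt_two_mul_eq, ← sqrt_mul_div_two_eq hlam0.le]; exact hode t ht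
  have hpseudo := nag_inner_map_self_le_two_mul_exp hT hcoer (sqrt_nonneg _) (sqrt_nonneg s)
    (nagRate_nonneg hα) (nagRate_le_one hα) (hΔ.differentiable two_ne_zero)
    hΔ.differentiable_deriv_two hodeT hinit ht
  have hW₀ : 0 ≤ ⟪Δ 0, T (Δ 0)⟫ := (hcoer (Δ 0)).trans' (by positivity)
  rw [sqrt_two_mul_mul_div_four hlam0.le]
  change 1 / 2 * ‖Δ t‖ ^ 2
    ≤ 26 * (1 / 2 * ⟪Δ 0, T (Δ 0)⟫) / (3 * lam0) * exp (-nagRate (μ * √s / 2) * μ * t)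
  rw [div_mul_eq_mul_div (26 * _), le_div_iff₀ (by positivity)]
  nlinarith [(hlowT (Δ t)).trans hpseudo,
    mul_nonneg hW₀ (exp_nonneg (-nagRate (μ * √s / 2) * μ * t))]

theorem nag_loss_convergence
    (n : ℕ) (hn : 0 < n) (H : Matrix (Fin n) (Fin n) ℝ) (hHsymm : H.IsSymm)
    (lam0 lamm s : ℝ) (hlam0 : 0 < lam0) (hlamm : 0 < lamm)
    (hs : 0 < s) (hs2 : s ≤ 2 / lamm)
    (hlow : ∀ v : EuclideanSpace ℝ (Fin n),
      3 * lam0 / 4 * ‖v‖ ^ 2 ≤ ⟪v, Matrix.toEuclideanLin H v⟫)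
    (hup : ∀ v : EuclideanSpace ℝ (Fin n),
      ⟪v, Matrix.toEuclideanLin H v⟫ ≤ lamm * ‖v‖ ^ 2)
    (Δ : ℝ → EuclideanSpace ℝ (Fin n)) (hΔ : ContDiff ℝ 2 Δ)
    (hode : ∀ t : ℝ, 0 ≤ t →
      deriv (deriv Δ) t + Real.sqrt (2 * lam0) • deriv Δ t
        + Real.sqrt s • Matrix.toEuclideanLin H (deriv Δ t)
        + (1 + Real.sqrt (lam0 * s / 2)) • Matrix.toEuclideanLin H (Δ t) = 0)
    (hinit : deriv Δ 0 = 0) :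
    ∀ t : ℝ, 0 ≤ t →
      (1 / 2) * ‖Δ t‖ ^ 2 ≤
        26 * ((1 / 2) * ⟪Δ 0, Matrix.toEuclideanLin H (Δ 0)⟫) / (3 * lam0) *
          Real.exp (-((1 / 2) * (4 + 3 * (Real.sqrt (2 * lam0 * s) / 4)
              - Real.sqrt (8 + 16 * (Real.sqrt (2 * lam0 * s) / 4)
                  + 9 * (Real.sqrt (2 * lam0 * s) / 4) ^ 2)))
            * Real.sqrt (lam0 / 2) * t) :=
  nag_loss_convergence_general n H hHsymm lam0 s hlam0 hlow Δ hΔ hode hinit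
end

section
/- Let n be a positive integer, H a symmetric n×n real matrix, and λ0, λm, s positive reals with 0 < s ≤ 2/λm, such that (3λ0/4)‖v‖² ≤ vᵀHv ≤ λm‖v‖² for all v ∈ ℝⁿ. Let Δ : ℝ → ℝⁿ be twice continuously differentiable and satisfy Δ''(t) + √(2λ0) Δ'(t) + √s H Δ'(t) + (1 + √(λ0 s/2)) H Δ(t) = 0 for all t ≥ 0, with Δ'(0) = 0. Set α := √(2 λ0 s)/4 and ρ*_NAG(α) := (1/2)(4 + 3α − √(8 + 16α + 9α²)). Then the pseudo-loss L̂(t) := (1/2) Δ(t)ᵀ H Δ(t) satisfies, for all t ≥ 0, L̂(t) ≤ ((13/3 + √(λ0 s/2))/(1 + √(λ0 s/2))) · L̂(0) · exp(−ρ*_NAG(α) √(λ0/2) t). -/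
/-!
Write `m = √(2λ₀)`, `β = m √s / 2` and view the ODE as the first-order system `x' = v`,
`v' = -(m v + √s A v + (1 + β) A x)`. For every `ρ ∈ [0, 1]` the energy
`E = ½‖v + (ρm/2) x‖² + (1 + (1 + ρ) β) ½⟪x, A x⟫ + ρ(1 - ρ) m²/4 ‖x‖²`, whose coefficients
make all cross terms `⟪v, x⟫`, `⟪v, A x⟫` cancel in `E' + (ρm/2) E`, satisfies
`E' ≤ -(ρm/2) E` as soon as `A ≥ 3m²/8`, so it decays exponentially by Grönwall.
It dominates `1 + (1 + ρ) β` times the pseudo-loss, and at zero velocity it is at most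
`1 + (1 + ρ) β + 2/3` times it, which gives the bound; the rate `ρ*_NAG(α)` lies in `[0, 1]`.
-/

open scoped RealInnerProductSpace

open Real Set

theorem le_mul_exp_of_hasDerivAt_le_mul {f f' : ℝ → ℝ} {K t : ℝ}
    (hf : ∀ τ, 0 ≤ τ → HasDerivAt f (f' τ) τ) (bound : ∀ τ, 0 ≤ τ → f' τ ≤ K * f τ)
    (ht : 0 ≤ t) : f t ≤ f 0 * exp (K * t) := by
  have hcont : ContinuousOn f (Icc 0 t) := fun τ hτ => (hf τ hτ.1).continuousAt.continuousWithinAt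
  have h := le_gronwallBound_of_liminf_deriv_right_le (ε := 0) hcont
    (fun τ hτ _ hr => (hf τ hτ.1).hasDerivWithinAt.liminf_right_slope_le hr) le_rfl
    (fun τ hτ => by simpa using bound τ hτ.1) t ⟨ht, le_rfl⟩
  rwa [gronwallBound_ε0, sub_zero] at h

noncomputable section NAGEnergy

variable {E : Type*} [NormedAddCommGroup E] [InnerProductSpace ℝ E]
  (A : E →L[ℝ] E) (m tq ρ : ℝ)

def nagEnergy (x v : E) : ℝ :=
  ‖v + (ρ * m / 2) • x‖ ^ 2 / 2 + (1 + (1 + ρ) * (m * tq / 2)) * (1 / 2 * ⟪x, A x⟫)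
    + ρ * (1 - ρ) * m ^ 2 / 4 * ‖x‖ ^ 2

def nagEnergyDeriv (x v w : E) : ℝ :=
  ⟪v + (ρ * m / 2) • x, w + (ρ * m / 2) • v⟫ + (1 + (1 + ρ) * (m * tq / 2)) * ⟪v, A x⟫
    + ρ * (1 - ρ) * m ^ 2 / 2 * ⟪x, v⟫

variable {A m tq ρ}

theorem hasDerivAt_nagEnergy (hA : (A : E →ₗ[ℝ] E).IsSymmetric) {x v : ℝ → E} {w : E} {t : ℝ}
    (hx : HasDerivAt x (v t) t) (hv : HasDerivAt v w t) :
    HasDerivAt (fun τ => nagEnergy A m tq ρ (x τ) (v τ))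
      (nagEnergyDeriv A m tq ρ (x t) (v t) w) t := by
  have hAx : HasDerivAt (fun τ => A (x τ)) (A (v t)) t := A.hasFDerivAt.comp_hasDerivAt t hx
  have hkin := ((hv.add (hx.const_smul (ρ * m / 2))).norm_sq).div_const 2
  have hpot := ((hx.inner ℝ hAx).const_mul (1 / 2)).const_mul (1 + (1 + ρ) * (m * tq / 2))
  have hquad := hx.norm_sq.const_mul (ρ * (1 - ρ) * m ^ 2 / 4)
  refine ((hkin.add hpot).add hquad).congr_deriv ?_
  have hsymm : ⟪x t, A (v t)⟫ = ⟪v t, A (x t)⟫ := by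
    rw [real_inner_comm]; exact hA (v t) (x t)
  simp only [nagEnergyDeriv, hsymm, Pi.add_apply, Pi.smul_apply]
  ring

theorem nagEnergyDeriv_add_mul_nagEnergy (hA : (A : E →ₗ[ℝ] E).IsSymmetric) {x v w : E}
    (hw : w + m • v + tq • A v + (1 + m * tq / 2) • A x = 0) :
    nagEnergyDeriv A m tq ρ x v w + ρ * m / 2 * nagEnergy A m tq ρ x v =
      m * (3 * ρ / 4 - 1) * ‖v‖ ^ 2 - tq * ⟪v, A v⟫ + ρ ^ 2 * m ^ 3 * (2 - ρ) / 16 * ‖x‖ ^ 2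
        - ρ * m / 4 * (1 + (1 - ρ) * (m * tq / 2)) * ⟪x, A x⟫ := by
  have hw' : w = -(m • v) - tq • A v - (1 + m * tq / 2) • A x := by
    linear_combination (norm := module) hw
  have hsymm : ⟪x, A v⟫ = ⟪v, A x⟫ := by rw [real_inner_comm]; exact hA v x
  have hcomm : ⟪x, v⟫ = ⟪v, x⟫ := real_inner_comm _ _
  simp only [nagEnergyDeriv, nagEnergy, hw', ← real_inner_self_eq_norm_sq, inner_add_left,
    inner_add_right, inner_sub_right, inner_neg_right,
    real_inner_smul_left, real_inner_smul_right, hsymm, hcomm]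
  ring

theorem nagEnergyDeriv_le (hA : (A : E →ₗ[ℝ] E).IsSymmetric)
    (hA_low : ∀ u : E, 3 * m ^ 2 / 8 * ‖u‖ ^ 2 ≤ ⟪u, A u⟫)
    (hm : 0 ≤ m) (htq : 0 ≤ tq) (hρ : ρ ∈ Icc (0 : ℝ) 1) {x v w : E}
    (hw : w + m • v + tq • A v + (1 + m * tq / 2) • A x = 0) :
    nagEnergyDeriv A m tq ρ x v w ≤ -ρ * (m / 2) * nagEnergy A m tq ρ x v := by
  obtain ⟨hρ0, hρ1⟩ := hρ
  have hv := hA_low v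
  have hx := hA_low x
  have h1 : 0 ≤ m * (1 - 3 * ρ / 4) * ‖v‖ ^ 2 := by
    have : 0 ≤ 1 - 3 * ρ / 4 := by linarith
    positivity
  have h2 : 0 ≤ tq * ⟪v, A v⟫ := mul_nonneg htq (le_trans (by positivity) hv)
  have h3 : 0 ≤ ρ * m / 4 * ((1 - ρ) * (m * tq / 2)) * ⟪x, A x⟫ := by
    have : 0 ≤ 1 - ρ := by linarith
    exact mul_nonneg (by positivity) (le_trans (by positivity) hx)
  have h4 : 0 ≤ ρ * m / 4 * (⟪x, A x⟫ - 3 * m ^ 2 / 8 * ‖x‖ ^ 2) :=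
    mul_nonneg (by positivity) (by linarith)
  have h5 : 0 ≤ ρ * m ^ 3 * ((ρ - 1) ^ 2 + 1 / 2) / 16 * ‖x‖ ^ 2 := by positivity
  linarith [nagEnergyDeriv_add_mul_nagEnergy (ρ := ρ) hA hw]

theorem mul_inner_le_nagEnergy (hρ : ρ ∈ Icc (0 : ℝ) 1) (x v : E) :
    (1 + (1 + ρ) * (m * tq / 2)) * (1 / 2 * ⟪x, A x⟫) ≤ nagEnergy A m tq ρ x v := by
  have hc2 : 0 ≤ ρ * (1 - ρ) * m ^ 2 / 4 * ‖x‖ ^ 2 := by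
    have : 0 ≤ 1 - ρ := by linarith [hρ.2]
    have := hρ.1
    positivity
  unfold nagEnergy
  linarith [sq_nonneg ‖v + (ρ * m / 2) • x‖]

theorem nagEnergy_zero_right_le (hA_low : ∀ u : E, 3 * m ^ 2 / 8 * ‖u‖ ^ 2 ≤ ⟪u, A u⟫) (x : E) :
    nagEnergy A m tq ρ x 0 ≤ (1 + (1 + ρ) * (m * tq / 2) + 2 / 3) * (1 / 2 * ⟪x, A x⟫) := by
  have hx := hA_low x
  simp only [nagEnergy, zero_add, norm_smul, mul_pow, Real.norm_eq_abs, sq_abs]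
  nlinarith [mul_nonneg (sq_nonneg (ρ - 1)) (mul_nonneg (sq_nonneg m) (sq_nonneg ‖x‖))]

theorem nag_pseudoLoss_le_mul_exp (hA : (A : E →ₗ[ℝ] E).IsSymmetric)
    (hA_low : ∀ u : E, 3 * m ^ 2 / 8 * ‖u‖ ^ 2 ≤ ⟪u, A u⟫)
    (hm : 0 ≤ m) (htq : 0 ≤ tq) (hρ : ρ ∈ Icc (0 : ℝ) 1) {x v w : ℝ → E}
    (hx : ∀ t, 0 ≤ t → HasDerivAt x (v t) t) (hv : ∀ t, 0 ≤ t → HasDerivAt v (w t) t)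
    (hode : ∀ t, 0 ≤ t → w t + m • v t + tq • A (v t) + (1 + m * tq / 2) • A (x t) = 0)
    (hv0 : v 0 = 0) {t : ℝ} (ht : 0 ≤ t) :
    1 / 2 * ⟪x t, A (x t)⟫ ≤
      (5 / 3 + m * tq / 2) / (1 + m * tq / 2) * (1 / 2 * ⟪x 0, A (x 0)⟫)
        * exp (-ρ * (m / 2) * t) := by
  set c := 1 + (1 + ρ) * (m * tq / 2) with hc
  have hdecay : nagEnergy A m tq ρ (x t) (v t) ≤
      nagEnergy A m tq ρ (x 0) (v 0) * exp (-ρ * (m / 2) * t) :=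
    le_mul_exp_of_hasDerivAt_le_mul
      (fun τ hτ => hasDerivAt_nagEnergy hA (hx τ hτ) (hv τ hτ))
      (fun τ hτ => nagEnergyDeriv_le hA hA_low hm htq hρ (hode τ hτ)) ht
  have hc0 : 0 < c := by
    have : 0 ≤ (1 + ρ) * (m * tq / 2) := mul_nonneg (by linarith [hρ.1]) (by positivity)
    linarith [hc]
  have hconst : c + 2 / 3 ≤ c * ((5 / 3 + m * tq / 2) / (1 + m * tq / 2)) := by
    have : 0 ≤ ρ * (m * tq / 2) := mul_nonneg hρ.1 (by positivity)
    rw [mul_div_assoc', le_div_iff₀ (by positivity)]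
    nlinarith [hc]
  have hloss0 : 0 ≤ 1 / 2 * ⟪x 0, A (x 0)⟫ :=
    mul_nonneg (by norm_num) ((by positivity : 0 ≤ 3 * m ^ 2 / 8 * ‖x 0‖ ^ 2).trans (hA_low _))
  refine le_of_mul_le_mul_left ?_ hc0
  calc c * (1 / 2 * ⟪x t, A (x t)⟫)
      ≤ nagEnergy A m tq ρ (x t) (v t) := mul_inner_le_nagEnergy hρ _ _
    _ ≤ nagEnergy A m tq ρ (x 0) 0 * exp (-ρ * (m / 2) * t) := hv0 ▸ hdecay
    _ ≤ (c + 2 / 3) * (1 / 2 * ⟪x 0, A (x 0)⟫) * exp (-ρ * (m / 2) * t) := by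
      gcongr; exact nagEnergy_zero_right_le hA_low _
    _ ≤ c * ((5 / 3 + m * tq / 2) / (1 + m * tq / 2)) * (1 / 2 * ⟪x 0, A (x 0)⟫)
          * exp (-ρ * (m / 2) * t) := by gcongr
    _ = c * ((5 / 3 + m * tq / 2) / (1 + m * tq / 2) * (1 / 2 * ⟪x 0, A (x 0)⟫)
          * exp (-ρ * (m / 2) * t)) := by ring

end NAGEnergy

theorem nagRate_mem_Icc {α : ℝ} (hα : 0 ≤ α) :
    1 / 2 * (4 + 3 * α - √(8 + 16 * α + 9 * α ^ 2)) ∈ Icc (0 : ℝ) 1 := by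
  have hS : √(8 + 16 * α + 9 * α ^ 2) ^ 2 = 8 + 16 * α + 9 * α ^ 2 := Real.sq_sqrt (by positivity)
  have hS0 := Real.sqrt_nonneg (8 + 16 * α + 9 * α ^ 2)
  constructor <;> nlinarith

theorem nag_pseudo_loss_convergence_general
    (n : ℕ) (H : Matrix (Fin n) (Fin n) ℝ) (hHsymm : H.IsSymm)
    (lam0 s : ℝ) (hlam0 : 0 < lam0)
    (hlow : ∀ v : EuclideanSpace ℝ (Fin n),
      3 * lam0 / 4 * ‖v‖ ^ 2 ≤ ⟪v, Matrix.toEuclideanLin H v⟫)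
    (Δ : ℝ → EuclideanSpace ℝ (Fin n)) (hΔ : ContDiff ℝ 2 Δ)
    (hode : ∀ t : ℝ, 0 ≤ t →
      deriv (deriv Δ) t + Real.sqrt (2 * lam0) • deriv Δ t
        + Real.sqrt s • Matrix.toEuclideanLin H (deriv Δ t)
        + (1 + Real.sqrt (lam0 * s / 2)) • Matrix.toEuclideanLin H (Δ t) = 0)
    (hinit : deriv Δ 0 = 0) :
    ∀ t : ℝ, 0 ≤ t →
      (1 / 2) * ⟪Δ t, Matrix.toEuclideanLin H (Δ t)⟫ ≤
        (13 / 3 + Real.sqrt (lam0 * s / 2)) / (1 + Real.sqrt (lam0 * s / 2)) *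
          ((1 / 2) * ⟪Δ 0, Matrix.toEuclideanLin H (Δ 0)⟫) *
          Real.exp (-((1 / 2) * (4 + 3 * (Real.sqrt (2 * lam0 * s) / 4)
              - Real.sqrt (8 + 16 * (Real.sqrt (2 * lam0 * s) / 4)
                  + 9 * (Real.sqrt (2 * lam0 * s) / 4) ^ 2)))
            * Real.sqrt (lam0 / 2) * t) := by
  intro t ht
  have hsqrt_div_four (y : ℝ) : √(y / 4) = √y / 2 := by
    rw [Real.sqrt_div' _ (by norm_num), show (4 : ℝ) = 2 ^ 2 by norm_num,
      Real.sqrt_sq (by norm_num)]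
  have hβ : √(lam0 * s / 2) = √(2 * lam0) * √s / 2 := by
    rw [← Real.sqrt_mul (by positivity), ← hsqrt_div_four]; ring_nf
  have hκ : √(lam0 / 2) = √(2 * lam0) / 2 := by rw [← hsqrt_div_four]; ring_nf
  have hm2 : √(2 * lam0) ^ 2 = 2 * lam0 := Real.sq_sqrt (by positivity)
  obtain ⟨hΔd, -, hΔ'⟩ := contDiff_succ_iff_deriv.mp (show ContDiff ℝ (1 + 1) Δ from hΔ)
  have hΔ'd : Differentiable ℝ (deriv Δ) := hΔ'.differentiable one_ne_zero
  rw [hβ] at hode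
  rw [hβ, hκ]
  refine (nag_pseudoLoss_le_mul_exp (A := (Matrix.toEuclideanLin H).toContinuousLinearMap)
    (Matrix.isSymmetric_toEuclideanLin_iff.mpr (Matrix.isHermitian_iff_isSymm.mpr hHsymm))
    (fun u => by rw [hm2]; exact (le_of_eq (by ring)).trans (hlow u))
    (Real.sqrt_nonneg _) (Real.sqrt_nonneg _)
    (nagRate_mem_Icc (α := √(2 * lam0 * s) / 4) (by positivity))
    (fun τ _ => (hΔd τ).hasDerivAt) (fun τ _ => (hΔ'd τ).hasDerivAt) hode hinit ht).trans ?_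
  have hloss0 : 0 ≤ ⟪Δ 0, Matrix.toEuclideanLin H (Δ 0)⟫ :=
    (by positivity : (0 : ℝ) ≤ 3 * lam0 / 4 * ‖Δ 0‖ ^ 2).trans (hlow (Δ 0))
  rw [LinearMap.coe_toContinuousLinearMap']
  gcongr
  norm_num

theorem nag_pseudo_loss_convergence
    (n : ℕ) (hn : 0 < n) (H : Matrix (Fin n) (Fin n) ℝ) (hHsymm : H.IsSymm)
    (lam0 lamm s : ℝ) (hlam0 : 0 < lam0) (hlamm : 0 < lamm)
    (hs : 0 < s) (hs2 : s ≤ 2 / lamm)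
    (hlow : ∀ v : EuclideanSpace ℝ (Fin n),
      3 * lam0 / 4 * ‖v‖ ^ 2 ≤ ⟪v, Matrix.toEuclideanLin H v⟫)
    (hup : ∀ v : EuclideanSpace ℝ (Fin n),
      ⟪v, Matrix.toEuclideanLin H v⟫ ≤ lamm * ‖v‖ ^ 2)
    (Δ : ℝ → EuclideanSpace ℝ (Fin n)) (hΔ : ContDiff ℝ 2 Δ)
    (hode : ∀ t : ℝ, 0 ≤ t →
      deriv (deriv Δ) t + Real.sqrt (2 * lam0) • deriv Δ t
        + Real.sqrt s • Matrix.toEuclideanLin H (deriv Δ t)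
        + (1 + Real.sqrt (lam0 * s / 2)) • Matrix.toEuclideanLin H (Δ t) = 0)
    (hinit : deriv Δ 0 = 0) :
    ∀ t : ℝ, 0 ≤ t →
      (1 / 2) * ⟪Δ t, Matrix.toEuclideanLin H (Δ t)⟫ ≤
        (13 / 3 + Real.sqrt (lam0 * s / 2)) / (1 + Real.sqrt (lam0 * s / 2)) *
          ((1 / 2) * ⟪Δ 0, Matrix.toEuclideanLin H (Δ 0)⟫) *
          Real.exp (-((1 / 2) * (4 + 3 * (Real.sqrt (2 * lam0 * s) / 4)
              - Real.sqrt (8 + 16 * (Real.sqrt (2 * lam0 * s) / 4)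
                  + 9 * (Real.sqrt (2 * lam0 * s) / 4) ^ 2)))
            * Real.sqrt (lam0 / 2) * t) :=
  nag_pseudo_loss_convergence_general n H hHsymm lam0 s hlam0 hlow Δ hΔ hode hinit
end
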